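/- Let E be a finite linearly ordered set and M a rank-3 paving matroid on E, and for k ∈ {0,1} let 𝒱^k(M) be as in the Pendavingh–Van der Pol encoding (unions over hyperplanes H of the even- /odd-indexed consecutive triples of H). If M has no minor isomorphic to 𝒲³ and no minor isomorphic to M(K₄), then for each k ∈ {0,1}, every 6-element subset of E contains at most 2 members of 𝒱^k(M); equivalently, the rank-3 sparse paving matroids M⁰ and M¹ with circuit-hyperplane families 𝒱⁰(M) and 𝒱¹(M) have no minor isomorphic to 𝒲³ or M(K₄). -/

import Mathlib

open Matroid Set Filter

namespace Paper

variable {α β : Type*}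

/-- Deletion of a set from a matroid. -/
def Delete (M : Matroid α) (D : Set α) : Matroid α := M ↾ (M.E \ D)

/-- Contraction of a set in a matroid, defined via duality. -/
def Contract (M : Matroid α) (C : Set α) : Matroid α := (Delete M✶ C)✶

/-- `N` is a minor of `M` if it is obtained from `M` by a contraction followed by a deletion. -/
def IsMinor (N M : Matroid α) : Prop := ∃ C D : Set α, N = Delete (Contract M C) D

/-- `M` is isomorphic to `N`. -/
def Iso (M : Matroid α) (N : Matroid β) : Prop :=
  ∃ (f : α → β) (hf : Set.InjOn f M.E), M.map f hf = N

/-- `M` has a minor isomorphic to `N`. -/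
def HasIsoMinor (M : Matroid α) (N : Matroid β) : Prop :=
  ∃ M' : Matroid α, IsMinor M' M ∧ Iso M' N

/-- A circuit is a minimal dependent set. -/
def Circuit (M : Matroid α) (C : Set α) : Prop := M.Dep C ∧ ∀ D, D ⊂ C → M.Indep D

/-- A hyperplane is a maximal proper flat. -/
def Hyperplane (M : Matroid α) (H : Set α) : Prop :=
  M.IsFlat H ∧ H ≠ M.E ∧ ∀ F, M.IsFlat F → H ⊂ F → F = M.E

/-- A matroid is sparse paving if every nonspanning circuit is a hyperplane. -/
def SparsePaving (M : Matroid α) : Prop :=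
  ∀ C, Circuit M C → ¬ M.Spanning C → Hyperplane M C

/-- `M` has rank `r`: some base has exactly `r` elements. -/
def RankEq (M : Matroid α) (r : ℕ) : Prop := ∃ B, M.IsBase B ∧ B.ncard = r

/-- `N` is (isomorphic to) the rank-3 whirl `𝒲³`: the rank-3 sparse paving matroid on six
elements whose 3-element circuits are exactly the three listed triples. -/
def IsWhirl3 (N : Matroid α) : Prop :=
  ∃ a : Fin 6 → α, Function.Injective a ∧ N.E = Set.range a ∧
    RankEq N 3 ∧ SparsePaving N ∧
    ∀ C : Set α, (Circuit N C ∧ C.ncard = 3) ↔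
      (C = {a 0, a 1, a 2} ∨ C = {a 2, a 3, a 4} ∨ C = {a 4, a 5, a 0})

/-- `N` is (isomorphic to) `M(K₄)`: the rank-3 sparse paving matroid on six elements whose
3-element circuits are exactly the four listed triples. -/
def IsMK4 (N : Matroid α) : Prop :=
  ∃ a : Fin 6 → α, Function.Injective a ∧ N.E = Set.range a ∧
    RankEq N 3 ∧ SparsePaving N ∧
    ∀ C : Set α, (Circuit N C ∧ C.ncard = 3) ↔
      (C = {a 0, a 1, a 2} ∨ C = {a 2, a 3, a 4} ∨ C = {a 4, a 5, a 0} ∨ C = {a 1, a 3, a 5})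

/-- `M` has no minor isomorphic to `𝒲³` and no minor isomorphic to `M(K₄)`. -/
def WFree (M : Matroid α) : Prop :=
  (¬ ∃ N : Matroid α, IsMinor N M ∧ IsWhirl3 N) ∧
  (¬ ∃ N : Matroid α, IsMinor N M ∧ IsMK4 N)

end Paper

namespace Paper

variable {α : Type*} [LinearOrder α]

/-- A rank-3 paving matroid: every circuit has 3 or 4 elements. -/
def Paving3 (M : Matroid α) : Prop :=
  RankEq M 3 ∧ ∀ C, Circuit M C → C.ncard = 3 ∨ C.ncard = 4

/-- `T` is a consecutive triple of `H`: a 3-element subset of `H` such that no element of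
`H \ T` lies strictly between two elements of `T`. -/
def ConsecTriple (H T : Set α) : Prop :=
  T ⊆ H ∧ T.ncard = 3 ∧ ∀ h ∈ H, h ∉ T → ∀ v ∈ T, ∀ v' ∈ T, ¬ (v < h ∧ h < v')

/-- `𝒱^k(M)` (`k ∈ {0,1}`): the union over all hyperplanes `H` of `M` of the even-indexed
(`k = 0`) resp. odd-indexed (`k = 1`) consecutive triples of `H`; the index of a consecutive
triple `T` of `H` in the induced linear order on `𝒱(H)` is the number of elements of `H`
strictly below all of `T`. -/
def Vk (M : Matroid α) (k : ℕ) : Set (Set α) :=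
  {T | ∃ H, Hyperplane M H ∧ ConsecTriple H T ∧
    {h ∈ H | ∀ t ∈ T, h < t}.ncard % 2 = k}

end Paper

namespace Paper

/-!
Two members of `𝒱^k(M)` sharing two points lie on a common hyperplane, because in a rank-3
paving matroid two points span a unique hyperplane; there they are consecutive triples whose
indices differ by at least two, so they share at most one point. Hence three members of
`𝒱^k(M)` inside a 6-set form a triangle `{a₀, a₁, a₂}, {a₂, a₃, a₄}, {a₄, a₅, a₀}`, and the same
parity argument shows that the three sides span distinct hyperplanes. Every hyperplane then meets
the six points in a side, in a subset of `{a₁, a₃, a₅}`, or in at most two points, so the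
restriction of `M` to the six points is `𝒲³` or `M(K₄)`, according to whether `{a₁, a₃, a₅}` is
independent.

For the second claim, a `𝒲³`- or `M(K₄)`-minor of `N` has the rank of `N`, so it is a
restriction of `N`; the sides of its triangle are then nonspanning circuits of `N`, that is,
members of `𝒱^k(M)`, and the argument above applies to them.
-/

lemma _root_.Matroid.IsFlat.eq_ground_of_isBase_subset {α : Type*} {M : Matroid α} {B F : Set α}
    (hF : M.IsFlat F) (hB : M.IsBase B) (hBF : B ⊆ F) : F = M.E :=
  hF.subset_ground.antisymm <| by
    simpa only [hB.closure_eq, hF.closure] using M.closure_subset_closure hBF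

section Matroid

variable {α : Type*} {M N N' : Matroid α} {B C F H H' K S T W : Set α} {r : ℕ}

lemma circuit_iff_isCircuit : Circuit M C ↔ M.IsCircuit C :=
  isCircuit_iff_forall_ssubset.symm

lemma isMinor_restrict (hS : S ⊆ M.E) : IsMinor (M ↾ S) M :=
  ⟨∅, M.E \ S, by
    show M ↾ S = M ／ ∅ ＼ (M.E \ S)
    rw [contract_empty, delete_compl]⟩

lemma WFree.not_restrict (h : WFree M) (hS : S ⊆ M.E) :
    ¬ (IsWhirl3 (M ↾ S) ∨ IsMK4 (M ↾ S)) := by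
  rintro (hW | hK)
  exacts [h.1 ⟨_, isMinor_restrict hS, hW⟩, h.2 ⟨_, isMinor_restrict hS, hK⟩]

lemma RankEq.ncard_eq (h : RankEq M r) (hB : M.IsBase B) : B.ncard = r := by
  obtain ⟨B₀, hB₀, rfl⟩ := h
  exact hB.ncard_eq_ncard_of_isBase hB₀

lemma RankEq.ncard_le_of_indep [M.RankFinite] (h : RankEq M r) {I : Set α} (hI : M.Indep I) :
    I.ncard ≤ r := by
  obtain ⟨B, hB, hIB⟩ := hI.exists_isBase_superset
  exact h.ncard_eq hB ▸ ncard_le_ncard hIB hB.finite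

lemma RankEq.isBase_of_indep [M.RankFinite] (h : RankEq M r) {I : Set α} (hI : M.Indep I)
    (hIr : I.ncard = r) : M.IsBase I := by
  obtain ⟨B, hB, hIB⟩ := hI.exists_isBase_superset
  rwa [eq_of_subset_of_ncard_le hIB (by rw [hIr, h.ncard_eq hB]) hB.finite]

lemma RankEq.not_spanning_of_dep [M.Finite] (h : RankEq M r) (hT : M.Dep T) (hTr : T.ncard = r) :
    ¬ M.Spanning T := fun hsp => by
  obtain ⟨B, hB, hBT⟩ := hsp.exists_isBase_subset
  have hBT : B = T := eq_of_subset_of_ncard_le hBT (by rw [hTr, h.ncard_eq hB])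
    (M.set_finite T hT.subset_ground)
  exact hT.not_indep (hBT ▸ hB.indep)

/-- In a minor of the same finite rank nothing of rank `> 0` was contracted, so the minor is a
restriction. -/
lemma IsMinor.isCircuit_of_rankEq [N.RankFinite] (h : IsMinor N' N) (hN : RankEq N r)
    (hN' : RankEq N' r) (hK : N'.IsCircuit K) : N.IsCircuit K := by
  obtain ⟨C, D, rfl⟩ := h
  change RankEq (N ／ C ＼ D) r at hN'
  change (N ／ C ＼ D).IsCircuit K at hK
  have hloops : C ∩ N.E ⊆ N.loops := by
    rintro e ⟨heC, heE⟩
    by_contra hnl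
    have he : N.IsNonloop e := (not_isLoop_iff heE).1 hnl
    obtain ⟨B', hB', hB'r⟩ := hN'
    have hC : N ／ C = N ／ {e} ／ (C \ {e}) := by
      rw [contract_contract, singleton_union, insert_sdiff_singleton, insert_eq_of_mem heC]
    have hB'e : (N ／ {e}).Indep B' := (hC ▸ hB'.indep.of_delete).of_contract
    obtain ⟨heB', hI⟩ := he.contractElem_indep_iff.1 hB'e
    have := hN.ncard_le_of_indep hI
    rw [ncard_insert_of_notMem heB' (hI.subset (subset_insert _ _)).finite, hB'r] at this
    omega
  have hK' : (N ／ C).IsCircuit K := IsCircuit.of_delete (D := D) hK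
  rw [← contract_inter_ground_eq, contract_eq_delete_of_subset_loops hloops] at hK'
  exact hK'.of_delete

lemma Hyperplane.not_isBase_subset (hH : Hyperplane M H) (hB : M.IsBase B) : ¬ B ⊆ H :=
  fun hBH => hH.2.1 (hH.1.eq_ground_of_isBase_subset hB hBH)

lemma Hyperplane.eq_of_subset (hH : Hyperplane M H) (hH' : Hyperplane M H') (h : H ⊆ H') :
    H = H' :=
  h.eq_or_ssubset.resolve_right fun hlt => hH'.2.1 (hH.2.2 H' hH'.1 hlt)

lemma Hyperplane.inter_restrict (hW : Hyperplane M W) (hS : S ⊆ M.E)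
    (hcl : M.closure (W ∩ S) = W) (hne : W ∩ S ≠ S) : Hyperplane (M ↾ S) (W ∩ S) := by
  refine ⟨?_, hne, fun F hF hWF => ?_⟩
  · rw [isFlat_iff_closure_eq, restrict_closure_eq _ inter_subset_right hS, hcl]
  have hFS : F ⊆ S := hF.subset_ground
  obtain ⟨w, hwF, hwW⟩ := exists_of_ssubset hWF
  have hWclF : W ⊂ M.closure F := by
    refine (ssubset_iff_of_subset ?_).2 ⟨w, M.subset_closure F (hFS.trans hS) hwF,
      fun hw => hwW ⟨hw, hFS hwF⟩⟩
    simpa only [hcl] using M.closure_subset_closure hWF.subset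
  have hclF : M.closure F = M.E := hW.2.2 _ (M.isFlat_closure F) hWclF
  rw [← hF.closure, restrict_closure_eq _ hFS hS, hclF, inter_eq_right.2 hS]
  rfl

end Matroid

section Paving

variable {α : Type*} {M : Matroid α} [M.Finite] {C H H' S T X : Set α} {x y w : α}

lemma Paving3.indep_of_ncard_le_two (hM : Paving3 M) (hX : X ⊆ M.E) (h2 : X.ncard ≤ 2) :
    M.Indep X := by
  by_contra hI
  obtain ⟨C, hCX, hC⟩ := ((not_indep_iff hX).1 hI).exists_isCircuit_subset
  have := ncard_le_ncard hCX (M.set_finite X hX)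
  rcases hM.2 C (circuit_iff_isCircuit.2 hC) with h | h <;> omega

lemma Paving3.indep_pair (hM : Paving3 M) (hx : x ∈ M.E) (hy : y ∈ M.E) : M.Indep {x, y} :=
  hM.indep_of_ncard_le_two (pair_subset hx hy) ((ncard_insert_le _ _).trans (by simp))

lemma Paving3.isCircuit_of_dep (hM : Paving3 M) (hT : M.Dep T) (h3 : T.ncard = 3) :
    M.IsCircuit T :=
  isCircuit_iff_forall_ssubset.2 ⟨hT, fun I hI => hM.indep_of_ncard_le_two
    (hI.subset.trans hT.subset_ground)
    (by have := ncard_lt_ncard hI (M.set_finite T hT.subset_ground); omega)⟩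

lemma Paving3.isBase_insert_pair (hM : Paving3 M) (hxy : x ≠ y) (hx : x ∈ M.E) (hy : y ∈ M.E)
    (hw : w ∈ M.E \ M.closure {x, y}) : M.IsBase (insert w {x, y}) := by
  have hwxy : w ∉ ({x, y} : Set α) := fun h => hw.2 (M.subset_closure _ (pair_subset hx hy) h)
  refine hM.1.isBase_of_indep (((hM.indep_pair hx hy).insert_indep_iff_of_notMem hwxy).2 hw) ?_
  rw [ncard_insert_of_notMem hwxy, ncard_pair hxy]

lemma Paving3.hyperplane_closure_pair (hM : Paving3 M) (hxy : x ≠ y) (hx : x ∈ M.E)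
    (hy : y ∈ M.E) : Hyperplane M (M.closure {x, y}) := by
  refine ⟨M.isFlat_closure _, fun h => ?_, fun F hF hlt => ?_⟩
  · obtain ⟨B, hB, hBxy⟩ := ((spanning_iff _ _).2 ⟨h, pair_subset hx hy⟩).exists_isBase_subset
    have := ncard_le_ncard hBxy
    rw [hM.1.ncard_eq hB, ncard_pair hxy] at this
    omega
  · obtain ⟨w, hwF, hw⟩ := exists_of_ssubset hlt
    refine hF.eq_ground_of_isBase_subset (hM.isBase_insert_pair hxy hx hy
      ⟨hF.subset_ground hwF, hw⟩) (insert_subset hwF ?_)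
    exact (M.subset_closure _ (pair_subset hx hy)).trans hlt.subset

lemma Paving3.eq_closure_pair (hM : Paving3 M) (hH : Hyperplane M H) (hxy : x ≠ y) (hx : x ∈ H)
    (hy : y ∈ H) : H = M.closure {x, y} := by
  have hP := hM.hyperplane_closure_pair hxy (hH.1.subset_ground hx) (hH.1.subset_ground hy)
  refine (hP.eq_of_subset hH ?_).symm
  simpa only [hH.1.closure] using M.closure_subset_closure (pair_subset hx hy)

lemma Paving3.hyperplane_eq (hM : Paving3 M) (hH : Hyperplane M H) (hH' : Hyperplane M H')
    (hxy : x ≠ y) (hx : x ∈ H) (hy : y ∈ H) (hx' : x ∈ H') (hy' : y ∈ H') : H = H' :=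
  (hM.eq_closure_pair hH hxy hx hy).trans (hM.eq_closure_pair hH' hxy hx' hy').symm

lemma Paving3.isCircuit_of_subset_hyperplane (hM : Paving3 M) (hH : Hyperplane M H) (hT : T ⊆ H)
    (h3 : T.ncard = 3) : M.IsCircuit T := by
  refine hM.isCircuit_of_dep ((not_indep_iff (hT.trans hH.1.subset_ground)).1 fun hI => ?_) h3
  exact hH.not_isBase_subset (hM.1.isBase_of_indep hI h3) hT

lemma Paving3.hyperplane_closure_of_isCircuit (hM : Paving3 M) (hC : M.IsCircuit C)
    (h3 : C.ncard = 3) : Hyperplane M (M.closure C) := by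
  obtain ⟨e, he⟩ := nonempty_of_ncard_ne_zero (s := C) (by omega)
  obtain ⟨x, y, hxy, hC'⟩ := ncard_eq_two.1 (show (C \ {e}).ncard = 2 by
    rw [ncard_sdiff_singleton_of_mem he]; omega)
  have hxyE : {x, y} ⊆ M.E := hC' ▸ sdiff_subset.trans hC.subset_ground
  rw [← hC.closure_sdiff_singleton_eq e, hC']
  exact hM.hyperplane_closure_pair hxy (hxyE (mem_insert _ _)) (hxyE (mem_insert_of_mem _ rfl))

lemma Paving3.sparsePaving_restrict (hM : Paving3 M) (hS : S ⊆ M.E)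
    (hS3 : ∀ H, Hyperplane M H → (H ∩ S).ncard ≤ 3) : SparsePaving (M ↾ S) := by
  intro C hC hns
  obtain ⟨hC, hCS⟩ := (restrict_isCircuit_iff hS).1 (circuit_iff_isCircuit.1 hC)
  rcases hM.2 C (circuit_iff_isCircuit.2 hC) with h3 | h4
  · have hW := hM.hyperplane_closure_of_isCircuit hC h3
    have hWS : M.closure C ∩ S = C :=
      (eq_of_subset_of_ncard_le (subset_inter (M.subset_closure C) hCS) (h3 ▸ hS3 _ hW)
        (M.set_finite _ (inter_subset_right.trans hS))).symm
    rw [← hWS]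
    refine hW.inter_restrict hS (by rw [hWS]) fun h => hns ?_
    rw [← hWS, h]
    exact (M ↾ S).ground_spanning
  · obtain ⟨D, hDC, hD3⟩ := exists_subset_card_eq (show 3 ≤ C.ncard by omega)
    have hDB := hM.1.isBase_of_indep (hC.ssubset_indep (hDC.ssubset_of_ne (by rintro rfl; omega)))
      hD3
    have hDS : (M ↾ S).IsBase D :=
      (isBase_restrict_iff hS).2 (hDB.isBasis_of_subset hS (hDC.trans hCS))
    exact (hns (hDS.spanning_of_superset hDC hCS)).elim

end Paving

section Counting

variable {α : Type*}

lemma exists_eq_triple_of_mem {A : Set α} (hA : A.ncard = 3) {u v : α} (hu : u ∈ A) (hv : v ∈ A)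
    (huv : u ≠ v) : ∃ w, A = {u, w, v} := by
  obtain ⟨w, hw⟩ := ncard_eq_one.1 (show (A \ {u, v}).ncard = 1 by
    rw [ncard_sdiff (pair_subset hu hv), ncard_pair huv, hA])
  have hwA : w ∈ A \ {u, v} := hw ▸ rfl
  refine ⟨w, Set.ext fun t => ⟨fun ht => ?_, ?_⟩⟩
  · by_contra! hne
    simp only [mem_insert_iff, mem_singleton_iff, not_or] at hne
    have : t ∈ ({w} : Set α) := hw ▸ ⟨ht, by simp [hne.1, hne.2.2]⟩
    exact hne.2.1 this
  · rintro (rfl | rfl | rfl)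
    exacts [hu, hwA.1, hv]

lemma ncard_union_union_add_ncard_inter {A B C : Set α} (hA : A.Finite) (hB : B.Finite)
    (hC : C.Finite) : (A ∪ B ∪ C).ncard + (A ∩ B).ncard + (A ∩ C).ncard + (B ∩ C).ncard =
      A.ncard + B.ncard + C.ncard + (A ∩ B ∩ C).ncard := by
  have e₁ := ncard_union_add_ncard_inter A B hA hB
  have e₂ := ncard_union_add_ncard_inter (A ∪ B) C (hA.union hB) hC
  have e₃ := ncard_union_add_ncard_inter (A ∩ C) (B ∩ C) (hA.subset inter_subset_left)
    (hB.subset inter_subset_left)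
  rw [union_inter_distrib_right] at e₂
  rw [← inter_inter_distrib_right] at e₃
  omega

lemma injective_of_ncard_range {n : ℕ} {a : Fin n → α} (h : (range a).ncard = n) :
    Function.Injective a := by
  rw [← injOn_univ, ← ncard_image_iff, image_univ, h, ncard_univ, Nat.card_eq_fintype_card,
    Fintype.card_fin]

lemma exists_triangle_of_ncard_inter_le_one {S T₁ T₂ T₃ : Set α} (hS : S.ncard = 6)
    (h₁ : T₁ ⊆ S) (h₂ : T₂ ⊆ S) (h₃ : T₃ ⊆ S)
    (c₁ : T₁.ncard = 3) (c₂ : T₂.ncard = 3) (c₃ : T₃.ncard = 3)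
    (i₁₂ : (T₁ ∩ T₂).ncard ≤ 1) (i₁₃ : (T₁ ∩ T₃).ncard ≤ 1) (i₂₃ : (T₂ ∩ T₃).ncard ≤ 1) :
    ∃ a : Fin 6 → α, Function.Injective a ∧ range a = S ∧
      T₁ = {a 0, a 1, a 2} ∧ T₂ = {a 2, a 3, a 4} ∧ T₃ = {a 4, a 5, a 0} := by
  have hSfin : S.Finite := finite_of_ncard_pos (by omega)
  have hT : T₁ ∪ T₂ ∪ T₃ ⊆ S := union_subset (union_subset h₁ h₂) h₃
  have hie := ncard_union_union_add_ncard_inter (hSfin.subset h₁) (hSfin.subset h₂)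
    (hSfin.subset h₃)
  have hU := ncard_le_ncard hT hSfin
  have h₀ : T₁ ∩ T₂ ∩ T₃ = ∅ :=
    (ncard_eq_zero ((hSfin.subset h₁).subset (inter_subset_left.trans inter_subset_left))).1
      (by omega)
  obtain ⟨p, hp⟩ := ncard_eq_one.1 (show (T₁ ∩ T₂).ncard = 1 by omega)
  obtain ⟨q, hq⟩ := ncard_eq_one.1 (show (T₁ ∩ T₃).ncard = 1 by omega)
  obtain ⟨r, hr⟩ := ncard_eq_one.1 (show (T₂ ∩ T₃).ncard = 1 by omega)
  have hp' : p ∈ T₁ ∩ T₂ := hp ▸ rfl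
  have hq' : q ∈ T₁ ∩ T₃ := hq ▸ rfl
  have hr' : r ∈ T₂ ∩ T₃ := hr ▸ rfl
  have hq₂ : q ∉ T₂ := fun h => (h₀ ▸ ⟨⟨hq'.1, h⟩, hq'.2⟩ : q ∈ (∅ : Set α))
  have hr₁ : r ∉ T₁ := fun h => (h₀ ▸ ⟨⟨h, hr'.1⟩, hr'.2⟩ : r ∈ (∅ : Set α))
  have hUS : T₁ ∪ T₂ ∪ T₃ = S := eq_of_subset_of_ncard_le hT (by omega) hSfin
  obtain ⟨x, rfl⟩ := exists_eq_triple_of_mem c₁ hq'.1 hp'.1 (by rintro rfl; exact hq₂ hp'.2)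
  obtain ⟨y, rfl⟩ := exists_eq_triple_of_mem c₂ hp'.2 hr'.1 (by rintro rfl; exact hr₁ hp'.1)
  obtain ⟨z, rfl⟩ := exists_eq_triple_of_mem c₃ hr'.2 hq'.2 (by rintro rfl; exact hq₂ hr'.1)
  have hrange : range ![q, x, p, y, r, z] = S := by
    rw [← hUS]
    simp only [Matrix.range_cons, Matrix.range_empty, union_empty, singleton_union]
    ext t
    simp only [mem_insert_iff, mem_singleton_iff, mem_union]
    tauto
  exact ⟨![q, x, p, y, r, z], injective_of_ncard_range (hrange ▸ hS), hrange, rfl, rfl, rfl⟩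

end Counting

structure Triangle {α : Type*} (M : Matroid α) (a : Fin 6 → α) (H₁ H₂ H₃ : Set α) : Prop where
  injective : Function.Injective a
  hyperplane₁ : Hyperplane M H₁
  hyperplane₂ : Hyperplane M H₂
  hyperplane₃ : Hyperplane M H₃
  subset₁ : {a 0, a 1, a 2} ⊆ H₁
  subset₂ : {a 2, a 3, a 4} ⊆ H₂
  subset₃ : {a 4, a 5, a 0} ⊆ H₃
  ne₁₂ : H₁ ≠ H₂
  ne₁₃ : H₁ ≠ H₃
  ne₂₃ : H₂ ≠ H₃

lemma ncard_triple_of_injective {α : Type*} {a : Fin 6 → α} (ha : Function.Injective a)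
    {i j k : Fin 6} (hij : i ≠ j) (hik : i ≠ k) (hjk : j ≠ k) :
    ({a i, a j, a k} : Set α).ncard = 3 :=
  ncard_eq_three.2 ⟨_, _, _, ha.ne hij, ha.ne hik, ha.ne hjk, rfl⟩

lemma triple_subset_range {α : Type*} (a : Fin 6 → α) (i j k : Fin 6) :
    {a i, a j, a k} ⊆ range a := by
  rintro _ (rfl | rfl | rfl) <;> exact mem_range_self _

lemma fin_six_triangle_cases (c : Finset (Fin 6)) : c.card ≤ 2 ∨ c ⊆ {1, 3, 5} ∨
    ∃ i ∈ c, ∃ j ∈ c, i ≠ j ∧ ((i ∈ ({0, 1, 2} : Finset (Fin 6)) ∧ j ∈ ({0, 1, 2} : Finset (Fin 6)))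
      ∨ (i ∈ ({2, 3, 4} : Finset (Fin 6)) ∧ j ∈ ({2, 3, 4} : Finset (Fin 6)))
      ∨ (i ∈ ({4, 5, 0} : Finset (Fin 6)) ∧ j ∈ ({4, 5, 0} : Finset (Fin 6)))) := by
  revert c
  decide

namespace Triangle

variable {α : Type*} {M : Matroid α} {a : Fin 6 → α} {H H₁ H₂ H₃ : Set α}

lemma mem₁ (h : Triangle M a H₁ H₂ H₃) : ∀ i ∈ ({0, 1, 2} : Finset (Fin 6)), a i ∈ H₁ := by
  simpa [insert_subset_iff] using h.subset₁

lemma mem₂ (h : Triangle M a H₁ H₂ H₃) : ∀ i ∈ ({2, 3, 4} : Finset (Fin 6)), a i ∈ H₂ := by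
  simpa [insert_subset_iff] using h.subset₂

lemma mem₃ (h : Triangle M a H₁ H₂ H₃) : ∀ i ∈ ({4, 5, 0} : Finset (Fin 6)), a i ∈ H₃ := by
  simpa [insert_subset_iff] using h.subset₃

lemma rotate (h : Triangle M a H₁ H₂ H₃) : Triangle M (a ∘ (· + 2)) H₂ H₃ H₁ :=
  ⟨h.injective.comp (add_left_injective 2), h.hyperplane₂, h.hyperplane₃, h.hyperplane₁,
    h.subset₂, h.subset₃, h.subset₁, h.ne₂₃, h.ne₁₂.symm, h.ne₁₃.symm⟩

lemma range_subset (h : Triangle M a H₁ H₂ H₃) : range a ⊆ M.E := by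
  rintro _ ⟨i, rfl⟩
  fin_cases i
  exacts [h.hyperplane₁.1.subset_ground (h.mem₁ 0 (by simp)),
    h.hyperplane₁.1.subset_ground (h.mem₁ 1 (by simp)),
    h.hyperplane₁.1.subset_ground (h.mem₁ 2 (by simp)),
    h.hyperplane₂.1.subset_ground (h.mem₂ 3 (by simp)),
    h.hyperplane₂.1.subset_ground (h.mem₂ 4 (by simp)),
    h.hyperplane₃.1.subset_ground (h.mem₃ 5 (by simp))]

variable [M.Finite]

lemma inter_range_eq₁ (h : Triangle M a H₁ H₂ H₃) (hM : Paving3 M) :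
    H₁ ∩ range a = {a 0, a 1, a 2} := by
  refine subset_antisymm ?_ (subset_inter h.subset₁ (triple_subset_range a 0 1 2))
  rintro _ ⟨hH, i, rfl⟩
  fin_cases i
  · exact mem_insert _ _
  · exact mem_insert_of_mem _ (mem_insert _ _)
  · exact mem_insert_of_mem _ (mem_insert_of_mem _ rfl)
  · exact (h.ne₁₂ (hM.hyperplane_eq h.hyperplane₁ h.hyperplane₂
      (h.injective.ne (show (2 : Fin 6) ≠ 3 by decide))
      (h.mem₁ 2 (by simp)) hH (h.mem₂ 2 (by simp)) (h.mem₂ 3 (by simp)))).elim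
  · exact (h.ne₁₂ (hM.hyperplane_eq h.hyperplane₁ h.hyperplane₂
      (h.injective.ne (show (2 : Fin 6) ≠ 4 by decide))
      (h.mem₁ 2 (by simp)) hH (h.mem₂ 2 (by simp)) (h.mem₂ 4 (by simp)))).elim
  · exact (h.ne₁₃ (hM.hyperplane_eq h.hyperplane₁ h.hyperplane₃
      (h.injective.ne (show (0 : Fin 6) ≠ 5 by decide))
      (h.mem₁ 0 (by simp)) hH (h.mem₃ 0 (by simp)) (h.mem₃ 5 (by simp)))).elim

lemma inter_range_eq₂ (h : Triangle M a H₁ H₂ H₃) (hM : Paving3 M) :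
    H₂ ∩ range a = {a 2, a 3, a 4} := by
  have := h.rotate.inter_range_eq₁ hM
  rw [(add_right_surjective (2 : Fin 6)).range_comp] at this
  exact this

lemma inter_range_eq₃ (h : Triangle M a H₁ H₂ H₃) (hM : Paving3 M) :
    H₃ ∩ range a = {a 4, a 5, a 0} := by
  have := h.rotate.inter_range_eq₂ hM
  rw [(add_right_surjective (2 : Fin 6)).range_comp] at this
  exact this

lemma inter_range_cases (h : Triangle M a H₁ H₂ H₃) (hM : Paving3 M) (hH : Hyperplane M H) :
    H ∩ range a = {a 0, a 1, a 2} ∨ H ∩ range a = {a 2, a 3, a 4} ∨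
      H ∩ range a = {a 4, a 5, a 0} ∨ H ∩ range a ⊆ {a 1, a 3, a 5} ∨ (H ∩ range a).ncard ≤ 2 := by
  classical
  set c : Finset (Fin 6) := Finset.univ.filter (a · ∈ H)
  have hc : H ∩ range a = a '' c := by
    ext t
    simp only [mem_inter_iff, mem_range, Finset.coe_filter, Finset.mem_univ, true_and, mem_image,
      c]
    constructor
    · rintro ⟨ht, i, rfl⟩
      exact ⟨i, ht, rfl⟩
    · rintro ⟨i, hi, rfl⟩
      exact ⟨hi, i, rfl⟩
  rcases fin_six_triangle_cases c with hc2 | hc135 | ⟨i, hi, j, hj, hij, hs⟩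
  · rw [hc, ncard_image_of_injective _ h.injective, ncard_coe_finset]
    exact Or.inr (Or.inr (Or.inr (Or.inr hc2)))
  · refine Or.inr (Or.inr (Or.inr (Or.inl ?_)))
    rw [hc]
    rintro _ ⟨i, hi, rfl⟩
    have := hc135 hi
    simp only [Finset.mem_insert, Finset.mem_singleton] at this
    rcases this with rfl | rfl | rfl <;> simp
  have hmem : ∀ i ∈ c, a i ∈ H := fun i hi => (Finset.mem_filter.1 hi).2
  have hside : ∀ {H' : Set α} {s : Finset (Fin 6)}, Hyperplane M H' → (∀ i ∈ s, a i ∈ H') →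
      i ∈ s → j ∈ s → H = H' := fun hH' hs hi' hj' =>
    hM.hyperplane_eq hH hH' (h.injective.ne hij) (hmem i hi) (hmem j hj) (hs i hi') (hs j hj')
  rcases hs with ⟨hi', hj'⟩ | ⟨hi', hj'⟩ | ⟨hi', hj'⟩
  · rw [hside h.hyperplane₁ h.mem₁ hi' hj']
    exact Or.inl (h.inter_range_eq₁ hM)
  · rw [hside h.hyperplane₂ h.mem₂ hi' hj']
    exact Or.inr (Or.inl (h.inter_range_eq₂ hM))
  · rw [hside h.hyperplane₃ h.mem₃ hi' hj']
    exact Or.inr (Or.inr (Or.inl (h.inter_range_eq₃ hM)))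

lemma sparsePaving_restrict (h : Triangle M a H₁ H₂ H₃) (hM : Paving3 M) :
    SparsePaving (M ↾ range a) := by
  refine hM.sparsePaving_restrict h.range_subset fun H hH => ?_
  have h3 := ncard_triple_of_injective h.injective (i := 1) (j := 3) (k := 5)
    (by decide) (by decide) (by decide)
  rcases h.inter_range_cases hM hH with e | e | e | e | e
  · rw [e, ncard_triple_of_injective h.injective (by decide) (by decide) (by decide)]
  · rw [e, ncard_triple_of_injective h.injective (by decide) (by decide) (by decide)]
  · rw [e, ncard_triple_of_injective h.injective (by decide) (by decide) (by decide)]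
  · exact h3 ▸ ncard_le_ncard e (toFinite _)
  · omega

lemma isBase (h : Triangle M a H₁ H₂ H₃) (hM : Paving3 M) : M.IsBase {a 0, a 2, a 4} := by
  have h24 : a 2 ≠ a 4 := h.injective.ne (by decide)
  have hcl := hM.eq_closure_pair h.hyperplane₂ h24 (h.mem₂ 2 (by simp)) (h.mem₂ 4 (by simp))
  refine hM.isBase_insert_pair h24 (h.range_subset (mem_range_self 2))
    (h.range_subset (mem_range_self 4)) ⟨h.range_subset (mem_range_self 0), fun h0 => ?_⟩
  have : a 0 ∈ H₂ ∩ range a := ⟨hcl ▸ h0, mem_range_self 0⟩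
  rw [h.inter_range_eq₂ hM] at this
  simp [h.injective.eq_iff] at this

lemma rankEq_restrict (h : Triangle M a H₁ H₂ H₃) (hM : Paving3 M) : RankEq (M ↾ range a) 3 :=
  ⟨_, (isBase_restrict_iff h.range_subset).2 ((h.isBase hM).isBasis_of_subset h.range_subset
    (triple_subset_range a 0 2 4)), ncard_triple_of_injective h.injective (by decide) (by decide)
    (by decide)⟩

lemma circuit_restrict_iff (h : Triangle M a H₁ H₂ H₃) (hM : Paving3 M) {C : Set α} :
    Circuit (M ↾ range a) C ∧ C.ncard = 3 ↔ C = {a 0, a 1, a 2} ∨ C = {a 2, a 3, a 4} ∨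
      C = {a 4, a 5, a 0} ∨ (C = {a 1, a 3, a 5} ∧ M.Dep {a 1, a 3, a 5}) := by
  have h012 := ncard_triple_of_injective h.injective (i := 0) (j := 1) (k := 2)
    (by decide) (by decide) (by decide)
  have h234 := ncard_triple_of_injective h.injective (i := 2) (j := 3) (k := 4)
    (by decide) (by decide) (by decide)
  have h450 := ncard_triple_of_injective h.injective (i := 4) (j := 5) (k := 0)
    (by decide) (by decide) (by decide)
  have h135 := ncard_triple_of_injective h.injective (i := 1) (j := 3) (k := 5)
    (by decide) (by decide) (by decide)
  rw [circuit_iff_isCircuit, restrict_isCircuit_iff h.range_subset]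
  constructor
  · rintro ⟨⟨hC, hCS⟩, h3⟩
    have hCW : C ⊆ M.closure C ∩ range a := subset_inter (M.subset_closure C) hCS
    have heq : ∀ {U : Set α}, C ⊆ U → U.ncard = 3 → U.Finite → C = U := fun hCU hU hfin =>
      eq_of_subset_of_ncard_le hCU (by omega) hfin
    rcases h.inter_range_cases hM (hM.hyperplane_closure_of_isCircuit hC h3) with e | e | e | e | e
    · exact Or.inl (heq (e ▸ hCW) h012 (toFinite _))
    · exact Or.inr (Or.inl (heq (e ▸ hCW) h234 (toFinite _)))
    · exact Or.inr (Or.inr (Or.inl (heq (e ▸ hCW) h450 (toFinite _))))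
    · obtain rfl := heq (hCW.trans e) h135 (toFinite _)
      exact Or.inr (Or.inr (Or.inr ⟨rfl, hC.dep⟩))
    · have := ncard_le_ncard hCW ((finite_range a).subset inter_subset_right)
      omega
  · rintro (rfl | rfl | rfl | ⟨rfl, hX⟩)
    · exact ⟨⟨hM.isCircuit_of_subset_hyperplane h.hyperplane₁ h.subset₁ h012,
        triple_subset_range a 0 1 2⟩, h012⟩
    · exact ⟨⟨hM.isCircuit_of_subset_hyperplane h.hyperplane₂ h.subset₂ h234,
        triple_subset_range a 2 3 4⟩, h234⟩
    · exact ⟨⟨hM.isCircuit_of_subset_hyperplane h.hyperplane₃ h.subset₃ h450,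
        triple_subset_range a 4 5 0⟩, h450⟩
    · exact ⟨⟨hM.isCircuit_of_dep hX h135, triple_subset_range a 1 3 5⟩, h135⟩

lemma isWhirl3_or_isMK4 (h : Triangle M a H₁ H₂ H₃) (hM : Paving3 M) :
    IsWhirl3 (M ↾ range a) ∨ IsMK4 (M ↾ range a) := by
  by_cases hX : M.Dep {a 1, a 3, a 5}
  · exact Or.inr ⟨a, h.injective, rfl, h.rankEq_restrict hM, h.sparsePaving_restrict hM,
      fun C => by simpa only [hX, and_true] using h.circuit_restrict_iff hM⟩
  · exact Or.inl ⟨a, h.injective, rfl, h.rankEq_restrict hM, h.sparsePaving_restrict hM,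
      fun C => by simpa only [hX, and_false, or_false] using h.circuit_restrict_iff hM⟩

end Triangle

section Order

variable {α : Type*} [LinearOrder α] {H T T₁ T₂ T₃ : Set α} {u x y : α}

noncomputable def position (H : Set α) (x : α) : ℕ := {h ∈ H | h < x}.ncard

/-- The index of the consecutive triple `T` in the ordered list `𝒱(H)`, as in `Vk`. -/
noncomputable def tripleIndex (H T : Set α) : ℕ := {h ∈ H | ∀ t ∈ T, h < t}.ncard

lemma position_strictMonoOn (hH : H.Finite) : StrictMonoOn (position H) H :=
  fun x hx _ _ hxy => ncard_lt_ncard ⟨fun _ hh => ⟨hh.1, hh.2.trans hxy⟩,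
    fun hsub => lt_irrefl x (hsub ⟨hx, hxy⟩).2⟩ (hH.subset (sep_subset _ _))

lemma ConsecTriple.position_eq (hT : ConsecTriple H T) (hH : H.Finite) (hu : u ∈ T) :
    position H u = tripleIndex H T + {t ∈ T | t < u}.ncard := by
  have hsplit : {h ∈ H | h < u} = {h ∈ H | ∀ t ∈ T, h < t} ∪ {t ∈ T | t < u} := by
    ext h
    simp only [mem_union, mem_sep_iff]
    constructor
    · rintro ⟨hh, hlt⟩
      by_cases hhT : h ∈ T
      · exact Or.inr ⟨hhT, hlt⟩
      · refine Or.inl ⟨hh, fun t ht => lt_of_not_ge fun hth => hT.2.2 h hh hhT t ht u hu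
          ⟨hth.lt_of_ne ?_, hlt⟩⟩
        rintro rfl
        exact hhT ht
    · rintro (⟨hh, hlt⟩ | ⟨ht, hlt⟩)
      exacts [⟨hh, hlt u hu⟩, ⟨hT.1 ht, hlt⟩]
  have hdisj : Disjoint {h ∈ H | ∀ t ∈ T, h < t} {t ∈ T | t < u} :=
    disjoint_left.2 fun h hlt ht => lt_irrefl h (hlt.2 h ht.1)
  rw [position, hsplit, ncard_union_eq hdisj (hH.subset (sep_subset _ _))
    ((hH.subset hT.1).subset (sep_subset _ _))]
  rfl

lemma ConsecTriple.position_mem_Icc (hT : ConsecTriple H T) (hH : H.Finite) (hu : u ∈ T) :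
    position H u ∈ Icc (tripleIndex H T) (tripleIndex H T + 2) := by
  have hlt : {t ∈ T | t < u}.ncard ≤ (T \ {u}).ncard :=
    ncard_le_ncard (fun t ht => ⟨ht.1, ht.2.ne⟩) ((hH.subset hT.1).sdiff)
  rw [ncard_sdiff_singleton_of_mem hu, hT.2.1] at hlt
  rw [hT.position_eq hH hu]
  exact ⟨by omega, by omega⟩

lemma ConsecTriple.image_position (hT : ConsecTriple H T) (hH : H.Finite) :
    position H '' T = Icc (tripleIndex H T) (tripleIndex H T + 2) := by
  refine eq_of_subset_of_ncard_le (image_subset_iff.2 fun u hu => hT.position_mem_Icc hH hu) ?_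
    (finite_Icc _ _)
  rw [ncard_Icc_nat, ((position_strictMonoOn hH).injOn.mono hT.1).ncard_image, hT.2.1]
  omega

lemma ConsecTriple.eq_of_tripleIndex_eq (hT₁ : ConsecTriple H T₁) (hT₂ : ConsecTriple H T₂)
    (hH : H.Finite) (h : tripleIndex H T₁ = tripleIndex H T₂) : T₁ = T₂ :=
  ((position_strictMonoOn hH).injOn.image_eq_image_iff hT₁.1 hT₂.1).1
    (by rw [hT₁.image_position hH, hT₂.image_position hH, h])

lemma ConsecTriple.ncard_inter_le_one (hT₁ : ConsecTriple H T₁) (hT₂ : ConsecTriple H T₂)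
    (hH : H.Finite) (hne : T₁ ≠ T₂) (hpar : tripleIndex H T₁ % 2 = tripleIndex H T₂ % 2) :
    (T₁ ∩ T₂).ncard ≤ 1 := by
  by_contra! h
  obtain ⟨u, v, hu, hv, huv⟩ := (one_lt_ncard_iff ((hH.subset hT₁.1).inter_of_left _)).1 h
  have hpos : position H u ≠ position H v :=
    fun h => huv ((position_strictMonoOn hH).injOn (hT₁.1 hu.1) (hT₁.1 hv.1) h)
  have h₁u := hT₁.position_mem_Icc hH hu.1
  have h₁v := hT₁.position_mem_Icc hH hv.1
  have h₂u := hT₂.position_mem_Icc hH hu.2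
  have h₂v := hT₂.position_mem_Icc hH hv.2
  have hidx := mt (hT₁.eq_of_tripleIndex_eq hT₂ hH) hne
  simp only [mem_Icc] at h₁u h₁v h₂u h₂v
  omega

lemma ConsecTriple.not_pairwise_inter_nonempty (hT₁ : ConsecTriple H T₁)
    (hT₂ : ConsecTriple H T₂) (hT₃ : ConsecTriple H T₃) (hH : H.Finite)
    (h₁₂ : T₁ ≠ T₂) (h₁₃ : T₁ ≠ T₃) (h₂₃ : T₂ ≠ T₃)
    (p₁₂ : tripleIndex H T₁ % 2 = tripleIndex H T₂ % 2)
    (p₁₃ : tripleIndex H T₁ % 2 = tripleIndex H T₃ % 2) :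
    ¬ ((T₁ ∩ T₂).Nonempty ∧ (T₁ ∩ T₃).Nonempty ∧ (T₂ ∩ T₃).Nonempty) := by
  rintro ⟨⟨u, hu₁, hu₂⟩, ⟨v, hv₁, hv₃⟩, ⟨w, hw₂, hw₃⟩⟩
  have := hT₁.position_mem_Icc hH hu₁
  have := hT₂.position_mem_Icc hH hu₂
  have := hT₁.position_mem_Icc hH hv₁
  have := hT₃.position_mem_Icc hH hv₃
  have := hT₂.position_mem_Icc hH hw₂
  have := hT₃.position_mem_Icc hH hw₃
  have := mt (hT₁.eq_of_tripleIndex_eq hT₂ hH) h₁₂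
  have := mt (hT₁.eq_of_tripleIndex_eq hT₃ hH) h₁₃
  have := mt (hT₂.eq_of_tripleIndex_eq hT₃ hH) h₂₃
  simp only [mem_Icc] at *
  omega

end Order

section Encoding

variable {α : Type*} [LinearOrder α] {M : Matroid α} {S T T' : Set α} {k : ℕ}

lemma ncard_eq_three_of_mem_Vk (hT : T ∈ Vk M k) : T.ncard = 3 :=
  let ⟨_, _, hc, _⟩ := hT
  hc.2.1

variable [M.Finite]

lemma Paving3.ncard_inter_le_one_of_mem_Vk (hM : Paving3 M) (hT : T ∈ Vk M k)
    (hT' : T' ∈ Vk M k) (hne : T ≠ T') : (T ∩ T').ncard ≤ 1 := by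
  obtain ⟨H, hH, hc, hp⟩ := hT
  obtain ⟨H', hH', hc', hp'⟩ := hT'
  have hHfin := M.set_finite H hH.1.subset_ground
  by_contra! h
  obtain ⟨u, v, hu, hv, huv⟩ := (one_lt_ncard_iff ((hHfin.subset hc.1).inter_of_left _)).1 h
  obtain rfl := hM.hyperplane_eq hH hH' huv (hc.1 hu.1) (hc.1 hv.1) (hc'.1 hu.2) (hc'.1 hv.2)
  exact (hc.ncard_inter_le_one hc' hHfin hne (hp.trans hp'.symm)).not_gt h

lemma Paving3.exists_triangle_of_mem_Vk (hM : Paving3 M) {a : Fin 6 → α}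
    (ha : Function.Injective a) (h₁ : {a 0, a 1, a 2} ∈ Vk M k) (h₂ : {a 2, a 3, a 4} ∈ Vk M k)
    (h₃ : {a 4, a 5, a 0} ∈ Vk M k) : ∃ H₁ H₂ H₃, Triangle M a H₁ H₂ H₃ := by
  have hne : ∀ {i j k l m n : Fin 6}, ({i, j, k} : Finset (Fin 6)) ≠ {l, m, n} →
      ({a i, a j, a k} : Set α) ≠ {a l, a m, a n} := fun h e => h <| Finset.coe_injective <|
    image_injective.2 ha (by simpa only [Finset.coe_insert, Finset.coe_singleton, image_insert_eq,
      image_singleton] using e)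
  obtain ⟨H₁, hH₁, hc₁, hp₁⟩ := h₁
  obtain ⟨H₂, hH₂, hc₂, hp₂⟩ := h₂
  obtain ⟨H₃, hH₃, hc₃, hp₃⟩ := h₃
  have hmem : ∀ {i j : Fin 6} {H : Set α}, i ≠ j → Hyperplane M H → a i ∈ H → a j ∈ H →
      ∀ {H'}, Hyperplane M H' → a i ∈ H' → a j ∈ H' → H = H' :=
    fun hij hH hi hj _ hH' hi' hj' => hM.hyperplane_eq hH hH' (ha.ne hij) hi hj hi' hj'
  -- the three sides cannot lie on one hyperplane, by the parity condition in `Vk`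
  have hsame : ¬ (H₁ = H₂ ∧ H₁ = H₃) := by
    rintro ⟨rfl, rfl⟩
    exact ConsecTriple.not_pairwise_inter_nonempty hc₁ hc₂ hc₃
      (M.set_finite H₁ hH₁.1.subset_ground) (hne (by decide)) (hne (by decide)) (hne (by decide))
      (hp₁.trans hp₂.symm) (hp₁.trans hp₃.symm) ⟨⟨a 2, by simp⟩, ⟨a 0, by simp⟩, ⟨a 4, by simp⟩⟩
  refine ⟨H₁, H₂, H₃, ha, hH₁, hH₂, hH₃, hc₁.1, hc₂.1, hc₃.1, fun e => hsame ⟨e, ?_⟩,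
    fun e => hsame ⟨?_, e⟩, fun e => hsame ⟨?_, ?_⟩⟩
  · exact hmem (show (0 : Fin 6) ≠ 4 by decide) hH₁ (hc₁.1 (by simp)) (e ▸ hc₂.1 (by simp)) hH₃
      (hc₃.1 (by simp)) (hc₃.1 (by simp))
  · exact hmem (show (2 : Fin 6) ≠ 4 by decide) hH₁ (hc₁.1 (by simp)) (e ▸ hc₃.1 (by simp)) hH₂
      (hc₂.1 (by simp)) (hc₂.1 (by simp))
  · exact hmem (show (0 : Fin 6) ≠ 2 by decide) hH₁ (hc₁.1 (by simp)) (hc₁.1 (by simp)) hH₂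
      (e ▸ hc₃.1 (by simp)) (hc₂.1 (by simp))
  · exact hmem (show (0 : Fin 6) ≠ 2 by decide) hH₁ (hc₁.1 (by simp)) (hc₁.1 (by simp)) hH₃
      (hc₃.1 (by simp)) (e ▸ hc₂.1 (by simp))

lemma Paving3.false_of_triangle_mem_Vk (hM : Paving3 M) (hfree : WFree M) {a : Fin 6 → α}
    (ha : Function.Injective a) (h₁ : {a 0, a 1, a 2} ∈ Vk M k) (h₂ : {a 2, a 3, a 4} ∈ Vk M k)
    (h₃ : {a 4, a 5, a 0} ∈ Vk M k) : False := by
  obtain ⟨H₁, H₂, H₃, htri⟩ := hM.exists_triangle_of_mem_Vk ha h₁ h₂ h₃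
  exact hfree.not_restrict htri.range_subset (htri.isWhirl3_or_isMK4 hM)

lemma Paving3.ncard_Vk_subset_le_two (hM : Paving3 M) (hfree : WFree M) (hS6 : S.ncard = 6) :
    {T ∈ Vk M k | T ⊆ S}.ncard ≤ 2 := by
  by_contra! h3
  obtain ⟨W, hW, hW3⟩ := exists_subset_card_eq h3
  obtain ⟨T₁, T₂, T₃, h₁₂, h₁₃, h₂₃, rfl⟩ := ncard_eq_three.1 hW3
  obtain ⟨hT₁, hT₁S⟩ := hW (mem_insert _ _)
  obtain ⟨hT₂, hT₂S⟩ := hW (mem_insert_of_mem _ (mem_insert _ _))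
  obtain ⟨hT₃, hT₃S⟩ := hW (mem_insert_of_mem _ (mem_insert_of_mem _ rfl))
  obtain ⟨a, ha, -, rfl, rfl, rfl⟩ := exists_triangle_of_ncard_inter_le_one hS6 hT₁S hT₂S hT₃S
    (ncard_eq_three_of_mem_Vk hT₁) (ncard_eq_three_of_mem_Vk hT₂) (ncard_eq_three_of_mem_Vk hT₃)
    (hM.ncard_inter_le_one_of_mem_Vk hT₁ hT₂ h₁₂) (hM.ncard_inter_le_one_of_mem_Vk hT₁ hT₃ h₁₃)
    (hM.ncard_inter_le_one_of_mem_Vk hT₂ hT₃ h₂₃)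
  exact hM.false_of_triangle_mem_Vk hfree ha hT₁ hT₂ hT₃

lemma Paving3.wFree_of_nonspanning_circuits_eq_Vk (hM : Paving3 M) (hfree : WFree M)
    {N : Matroid α} (hNE : N.E = M.E) (hN : RankEq N 3)
    (hNc : {C : Set α | Circuit N C ∧ ¬ N.Spanning C} = Vk M k) : WFree N := by
  have : N.Finite := ⟨hNE ▸ M.ground_finite⟩
  have hVk : ∀ N', IsMinor N' N → RankEq N' 3 → ∀ T, Circuit N' T ∧ T.ncard = 3 → T ∈ Vk M k := by
    rintro N' hmin hN' T ⟨hTc, hT3⟩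
    have hTN := hmin.isCircuit_of_rankEq hN hN' (circuit_iff_isCircuit.1 hTc)
    exact hNc ▸ ⟨circuit_iff_isCircuit.2 hTN, hN.not_spanning_of_dep hTN.dep hT3⟩
  refine ⟨fun ⟨N', hmin, a, ha, _, hN', _, hc⟩ => ?_, fun ⟨N', hmin, a, ha, _, hN', _, hc⟩ => ?_⟩
  · exact hM.false_of_triangle_mem_Vk hfree ha (hVk N' hmin hN' _ ((hc _).2 (Or.inl rfl)))
      (hVk N' hmin hN' _ ((hc _).2 (Or.inr (Or.inl rfl))))
      (hVk N' hmin hN' _ ((hc _).2 (Or.inr (Or.inr rfl))))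
  · exact hM.false_of_triangle_mem_Vk hfree ha (hVk N' hmin hN' _ ((hc _).2 (Or.inl rfl)))
      (hVk N' hmin hN' _ ((hc _).2 (Or.inr (Or.inl rfl))))
      (hVk N' hmin hN' _ ((hc _).2 (Or.inr (Or.inr (Or.inl rfl)))))

end Encoding

/-- If a rank-3 paving matroid `M` on a finite linearly ordered ground set has no `𝒲³`- and no
`M(K₄)`-minor, then for `k ∈ {0,1}` every 6-element subset of the ground set contains at most
two members of `𝒱^k(M)`; equivalently, every rank-3 sparse paving matroid whose
circuit-hyperplane family is `𝒱^k(M)` has no `𝒲³`- or `M(K₄)`-minor. -/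
theorem paving_encoding_WFree {α : Type*} [LinearOrder α] (E : Set α) (hE : E.Finite)
    (M : Matroid α) (hME : M.E = E) (hM : Paving3 M) (hfree : WFree M) :
    ∀ k ∈ ({0, 1} : Set ℕ),
      (∀ S : Set α, S ⊆ E → S.ncard = 6 → {T ∈ Vk M k | T ⊆ S}.ncard ≤ 2) ∧
      (∀ N : Matroid α, N.E = E → RankEq N 3 → SparsePaving N →
        {C : Set α | Circuit N C ∧ ¬ N.Spanning C} = Vk M k → WFree N) := by
  subst hME
  have : M.Finite := ⟨hE⟩
  intro k _
  exact ⟨fun S _ hS6 => hM.ncard_Vk_subset_le_two hfree hS6,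
    fun N hNE hN _ hNc => hM.wFree_of_nonspanning_circuits_eq_Vk hfree hNE hN hNc⟩

end Paper
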